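/- Let K_{SP} and K_P be generalized number lattices that are self dual relative to involutive permutations p(·) of S ⊎ P (with p(S)=S, p(P)=P, p²=identity) and p|_P(·) respectively, meaning K^d equals the image of K under the permutation of coordinates. Then K_{SP} ↔ K_P is self dual relative to p|_S(·). -/

import Mathlib

/-- A generalized number lattice. -/
def IsGenNumLat {M : Type*} [AddCommGroup M] [Module ℚ M] (K : Set M) : Prop :=
  ∃ (n k : ℕ) (b : Fin n → M) (c : Fin k → M),
    K = {x | ∃ (l : Fin n → ℤ) (m : Fin k → ℚ),
      x = (∑ i, (l i : ℚ) • b i) + ∑ j, m j • c j}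

/-- The dual of a collection of vectors. -/
def dualLat {X : Type*} [Fintype X] (K : Set (X → ℚ)) : Set (X → ℚ) :=
  {g | ∀ f ∈ K, ∃ z : ℤ, ∑ x, f x * g x = (z : ℚ)}

/-!
A generalized number lattice `K` can be written as `ℤ e + V` with `V` a subspace and with
vectors `g` biorthogonal to `e` and orthogonal to `V` (lift a `ℤ`-basis of the image of `K` in
the quotient by `V`). Its dual is then `ℤ g + (e, V)^⊥`, a form of the same shape with the roles
of `e` and `g` exchanged, so `K^dd = K`; consequently `(A ∩ B)^d = A^d + B^d`. Applied to
`K_SP ∩ {x | x_P ∈ K_P}` this gives the implicit duality theorem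
`(K_SP ↔ K_P)^d = K_SP^d ↔ K_P^d`, and the self-duality of `K_SP` and `K_P` turns the right-hand
side into `K_SP ↔ K_P` with coordinates permuted by `p_S`.
-/

open Function Submodule
open scoped Pointwise

section dualLat

variable {X : Type*} [Fintype X]

lemma mem_dualLat {K : Set (X → ℚ)} {g : X → ℚ} :
    g ∈ dualLat K ↔ ∀ f ∈ K, ∃ z : ℤ, f ⬝ᵥ g = z :=
  Iff.rfl

lemma zero_mem_dualLat (K : Set (X → ℚ)) : 0 ∈ dualLat K :=
  fun _ _ => ⟨0, by simp⟩

lemma neg_mem_dualLat {K : Set (X → ℚ)} {g : X → ℚ} (hg : g ∈ dualLat K) : -g ∈ dualLat K :=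
  mem_dualLat.2 fun f hf =>
    let ⟨z, hz⟩ := mem_dualLat.1 hg f hf
    ⟨-z, by rw [dotProduct_neg, hz, Int.cast_neg]⟩

lemma dotProduct_eq_zero_of_forall_smul_mem {K : Set (X → ℚ)} {a u : X → ℚ}
    (hu : u ∈ dualLat K) (ha : ∀ t : ℚ, t • a ∈ K) : a ⬝ᵥ u = 0 := by
  by_contra hne
  obtain ⟨z, hz⟩ := mem_dualLat.1 hu _ (ha (1 / (2 * a ⬝ᵥ u)))
  rw [smul_dotProduct, smul_eq_mul] at hz
  have : ((2 * z : ℤ) : ℚ) = 1 := by push_cast; rw [← hz]; field_simp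
  have : 2 * z = 1 := by exact_mod_cast this
  omega

lemma dualLat_add {C D : Set (X → ℚ)} (hC : 0 ∈ C) (hD : 0 ∈ D) :
    dualLat (C + D) = dualLat C ∩ dualLat D := by
  ext u
  refine ⟨fun hu => ⟨fun f hf => hu f ⟨f, hf, 0, hD, add_zero f⟩,
    fun f hf => hu f ⟨0, hC, f, hf, zero_add f⟩⟩, ?_⟩
  rintro ⟨hC, hD⟩
  refine mem_dualLat.2 ?_
  rintro _ ⟨a, ha, b, hb, rfl⟩
  obtain ⟨z, hz⟩ := mem_dualLat.1 hC a ha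
  obtain ⟨z', hz'⟩ := mem_dualLat.1 hD b hb
  exact ⟨z + z', by rw [add_dotProduct, hz, hz', Int.cast_add]⟩

end dualLat

section zSpanAdd

variable {M N : Type*} [AddCommGroup M] [Module ℚ M] [AddCommGroup N] [Module ℚ N]
  {I J : Type*} [Fintype I] [Fintype J]

def zSpanAdd (e : I → M) (V : Submodule ℚ M) : Set M :=
  {x | ∃ l : I → ℤ, x - ∑ i, (l i : ℚ) • e i ∈ V}

lemma zSpanAdd_eq_preimage_mkQ (e : I → M) (V : Submodule ℚ M) :
    zSpanAdd e V = V.mkQ ⁻¹' (span ℤ (Set.range (V.mkQ ∘ e)) : Set (M ⧸ V)) := by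
  ext x
  simp only [Set.mem_preimage, SetLike.mem_coe, mem_span_range_iff_exists_fun]
  refine exists_congr fun l => ?_
  have : ∑ i, l i • (V.mkQ ∘ e) i = V.mkQ (∑ i, (l i : ℚ) • e i) := by
    simp [Int.cast_smul_eq_zsmul]
  rw [this, mkQ_apply, mkQ_apply, Submodule.Quotient.eq, ← neg_mem_iff, neg_sub]

lemma mem_zSpanAdd_of_mem {e : I → M} {V : Submodule ℚ M} {v : M} (hv : v ∈ V) :
    v ∈ zSpanAdd e V :=
  ⟨0, by simpa using hv⟩

lemma mem_zSpanAdd_self {e : I → M} {V : Submodule ℚ M} (i : I) : e i ∈ zSpanAdd e V := by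
  classical
  exact ⟨Pi.single i 1, by simp [Pi.single_apply]⟩

lemma zSpanAdd_comp_equiv (e : I → M) (V : Submodule ℚ M) (σ : J ≃ I) :
    zSpanAdd (e ∘ σ) V = zSpanAdd e V := by
  ext x
  refine ⟨fun ⟨l, hl⟩ => ⟨l ∘ σ.symm, ?_⟩, fun ⟨l, hl⟩ => ⟨l ∘ σ, ?_⟩⟩
  · simpa [← σ.sum_comp] using hl
  · simpa [σ.sum_comp (fun i => (l i : ℚ) • e i)] using hl

lemma zSpanAdd_span_range (b : I → M) (c : J → M) :
    zSpanAdd b (span ℚ (Set.range c)) =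
      {x | ∃ (l : I → ℤ) (m : J → ℚ), x = ∑ i, (l i : ℚ) • b i + ∑ j, m j • c j} := by
  ext x
  simp only [zSpanAdd, Set.mem_ofPred_eq, mem_span_range_iff_exists_fun,
    eq_comm (a := ∑ j, _ • c j), sub_eq_iff_eq_add']

lemma IsGenNumLat.exists_eq_zSpanAdd {K : Set M} (hK : IsGenNumLat K) :
    ∃ (n : ℕ) (b : Fin n → M) (V : Submodule ℚ M), K = zSpanAdd b V := by
  obtain ⟨n, k, b, c, rfl⟩ := hK
  exact ⟨n, b, span ℚ (Set.range c), (zSpanAdd_span_range b c).symm⟩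

lemma isGenNumLat_zSpanAdd [FiniteDimensional ℚ M] (e : I → M) (V : Submodule ℚ M) :
    IsGenNumLat (zSpanAdd e V) := by
  obtain ⟨k, c, rfl⟩ := fg_iff_exists_fin_generating_family.mp (IsNoetherian.noetherian V)
  rw [← zSpanAdd_comp_equiv e _ (Fintype.equivFin I).symm]
  exact ⟨_, k, _, c, zSpanAdd_span_range _ c⟩

lemma zSpanAdd_add_zSpanAdd (e : I → M) (e' : J → M) (V V' : Submodule ℚ M) :
    zSpanAdd e V + zSpanAdd e' V' = zSpanAdd (Sum.elim e e') (V ⊔ V') := by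
  ext x
  simp only [zSpanAdd, Set.mem_add, Set.mem_ofPred_eq, Fintype.sum_sum_type]
  constructor
  · rintro ⟨y, ⟨l, hl⟩, y', ⟨l', hl'⟩, rfl⟩
    refine ⟨Sum.elim l l', ?_⟩
    convert add_mem_sup hl hl' using 1
    simp only [Sum.elim_inl, Sum.elim_inr]
    abel
  · rintro ⟨l, hl⟩
    obtain ⟨v, hv, v', hv', hvv'⟩ := mem_sup.mp hl
    refine ⟨∑ i, (l (.inl i) : ℚ) • e i + v, ⟨l ∘ .inl, by simpa using hv⟩,
      ∑ j, (l (.inr j) : ℚ) • e' j + v', ⟨l ∘ .inr, by simpa using hv'⟩, ?_⟩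
    rw [← sub_eq_zero, ← sub_eq_zero.mpr hvv']
    simp only [Sum.elim_inl, Sum.elim_inr]
    abel

lemma exists_linearIndependent_zSpanAdd_eq (b : I → M) (V : Submodule ℚ M) :
    ∃ (n : ℕ) (e : Fin n → M), zSpanAdd e V = zSpanAdd b V ∧ LinearIndependent ℚ (V.mkQ ∘ e) := by
  set Q := span ℤ (Set.range (V.mkQ ∘ b))
  -- `Q` is a finitely generated torsion-free `ℤ`-module, hence free.
  have := IsAddTorsionFree.of_module_rat (M ⧸ V)
  have := Module.Finite.span_of_finite ℤ (Set.finite_range (V.mkQ ∘ b))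
  let β := Module.finBasis ℤ Q
  choose e he using fun i => V.mkQ_surjective (β i)
  have hβ : V.mkQ ∘ e = Q.subtype ∘ β := funext he
  refine ⟨_, e, ?_, ?_⟩
  · rw [zSpanAdd_eq_preimage_mkQ, zSpanAdd_eq_preimage_mkQ, hβ, Set.range_comp, span_image,
      β.span_eq, Submodule.map_top, range_subtype]
  · rw [hβ, ← LinearIndependent.iff_fractionRing ℤ ℚ]
    exact β.linearIndependent.map' Q.subtype (ker_subtype Q)

lemma preimage_zSpanAdd (φ : M →ₗ[ℚ] N) {e : I → N} {e' : I → M} (he : ∀ i, φ (e' i) = e i)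
    (V : Submodule ℚ N) : φ ⁻¹' zSpanAdd e V = zSpanAdd e' (V.comap φ) := by
  ext x
  simp [zSpanAdd, he]

lemma IsGenNumLat.preimage [FiniteDimensional ℚ M] {K : Set N} (hK : IsGenNumLat K)
    {φ : M →ₗ[ℚ] N} (hφ : Surjective φ) : IsGenNumLat (φ ⁻¹' K) := by
  obtain ⟨n, b, V, rfl⟩ := hK.exists_eq_zSpanAdd
  choose b' hb' using fun i => hφ (b i)
  rw [preimage_zSpanAdd φ hb']
  exact isGenNumLat_zSpanAdd b' _

end zSpanAdd

lemma exists_dotProduct_eq {R X : Type*} [CommSemiring R] [Fintype X]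
    (f : Module.Dual R (X → R)) : ∃ u, ∀ x, x ⬝ᵥ u = f x := by
  classical
  refine ⟨(dotProductEquiv R X).symm f, fun x => ?_⟩
  rw [dotProduct_comm]
  exact LinearMap.congr_fun ((dotProductEquiv R X).apply_symm_apply f) x

section DualFamily

variable {X I : Type*} [Fintype X]

lemma mem_of_forall_dotProduct_eq_zero {V : Submodule ℚ (X → ℚ)} {y : X → ℚ}
    (h : ∀ u, (∀ v ∈ V, v ⬝ᵥ u = 0) → y ⬝ᵥ u = 0) : y ∈ V := by
  by_contra hy
  obtain ⟨f, hfy, hfV⟩ := V.exists_dual_map_eq_bot_of_notMem hy inferInstance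
  obtain ⟨u, hu⟩ := exists_dotProduct_eq f
  refine hfy ((hu y).symm.trans (h u fun v hv => ?_))
  rw [hu, ← mem_bot ℚ, ← hfV]
  exact mem_map_of_mem hv

def dotOrth (e : I → X → ℚ) (V : Submodule ℚ (X → ℚ)) : Submodule ℚ (X → ℚ) where
  carrier := {u | (∀ i, e i ⬝ᵥ u = 0) ∧ ∀ v ∈ V, v ⬝ᵥ u = 0}
  add_mem' hu hw := ⟨fun i => by simp [dotProduct_add, hu.1 i, hw.1 i],
    fun v hv => by simp [dotProduct_add, hu.2 v hv, hw.2 v hv]⟩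
  zero_mem' := by simp
  smul_mem' t u hu := ⟨fun i => by simp [dotProduct_smul, hu.1 i],
    fun v hv => by simp [dotProduct_smul, hu.2 v hv]⟩

lemma dotProduct_eq_zero_of_mem_dotOrth [Fintype I] {e : I → X → ℚ} {V : Submodule ℚ (X → ℚ)}
    {u x : X → ℚ} (hu : u ∈ dotOrth e V) {c : I → ℚ} (hx : x - ∑ i, c i • e i ∈ V) :
    x ⬝ᵥ u = 0 := by
  rw [← sub_add_cancel x (∑ i, c i • e i), add_dotProduct, hu.2 _ hx, sum_dotProduct]
  simp [smul_dotProduct, hu.1]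

variable [DecidableEq I]

structure IsDualFamily (e g : I → X → ℚ) (V : Submodule ℚ (X → ℚ)) : Prop where
  dotProduct_eq_zero : ∀ v ∈ V, ∀ j, v ⬝ᵥ g j = 0
  dotProduct_eq_single : ∀ i j, e i ⬝ᵥ g j = (Pi.single i 1 : I → ℚ) j

lemma LinearIndependent.exists_isDualFamily [Fintype I] {e : I → X → ℚ} {V : Submodule ℚ (X → ℚ)}
    (he : LinearIndependent ℚ (V.mkQ ∘ e)) : ∃ g, IsDualFamily e g V := by
  obtain ⟨φ, hφ⟩ := LinearMap.exists_leftInverse_of_injective _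
    (LinearMap.ker_eq_bot.mpr he.fintypeLinearCombination_injective)
  -- `g j` represents the `j`-th coordinate of a left inverse of `c ↦ ∑ i, c i • [e i]`.
  choose g hg using fun j => exists_dotProduct_eq ((LinearMap.proj j).comp (φ.comp V.mkQ))
  refine ⟨g, fun v hv j => ?_, fun i j => ?_⟩
  · simp [hg, (Submodule.Quotient.mk_eq_zero V).mpr hv]
  · have := LinearMap.congr_fun hφ (Pi.single i 1)
    rw [LinearMap.comp_apply, Fintype.linearCombination_apply_single, one_smul] at this
    rw [hg]
    exact congrFun this j

namespace IsDualFamily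

variable {e g : I → X → ℚ} {V : Submodule ℚ (X → ℚ)}

lemma symm (h : IsDualFamily e g V) : IsDualFamily g e (dotOrth e V) where
  dotProduct_eq_zero u hu j := by rw [dotProduct_comm]; exact hu.1 j
  dotProduct_eq_single i j := by rw [dotProduct_comm, h.dotProduct_eq_single, Pi.single_comm]

variable [Fintype I]

lemma sum_smul_dotProduct (h : IsDualFamily e g V) (c : I → ℚ) (j : I) :
    (∑ i, c i • e i) ⬝ᵥ g j = c j := by
  simp [sum_dotProduct, smul_dotProduct, h.dotProduct_eq_single, Pi.single_apply]

lemma dotProduct_sum_smul (h : IsDualFamily e g V) (c : I → ℚ) (i : I) :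
    e i ⬝ᵥ ∑ j, c j • g j = c i := by
  simp [dotProduct_sum, dotProduct_smul, h.dotProduct_eq_single, Pi.single_apply]

lemma dotProduct_eq_of_sub_mem (h : IsDualFamily e g V) {x : X → ℚ} {c : I → ℚ}
    (hx : x - ∑ i, c i • e i ∈ V) (j : I) : x ⬝ᵥ g j = c j := by
  rw [← sub_add_cancel x (∑ i, c i • e i), add_dotProduct, h.dotProduct_eq_zero _ hx, zero_add,
    h.sum_smul_dotProduct]

lemma sub_sum_mem_dotOrth (h : IsDualFamily e g V) {u : X → ℚ} (hu : ∀ v ∈ V, v ⬝ᵥ u = 0) :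
    u - ∑ j, (e j ⬝ᵥ u) • g j ∈ dotOrth e V :=
  ⟨fun i => by rw [dotProduct_sub, h.dotProduct_sum_smul, sub_self],
    fun v hv => by simp [dotProduct_sum, dotProduct_smul, hu v hv, h.dotProduct_eq_zero v hv]⟩

lemma dotOrth_dotOrth (h : IsDualFamily e g V) : dotOrth g (dotOrth e V) = V := by
  refine le_antisymm (fun y hy => mem_of_forall_dotProduct_eq_zero fun u hu => ?_)
    fun v hv => ⟨fun j => by rw [dotProduct_comm]; exact h.dotProduct_eq_zero v hv j,
      fun u hu => by rw [dotProduct_comm]; exact hu.2 v hv⟩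
  have h0 : (u - ∑ j, (e j ⬝ᵥ u) • g j) ⬝ᵥ y = 0 := hy.2 _ (h.sub_sum_mem_dotOrth hu)
  rw [dotProduct_comm, dotProduct_sub, dotProduct_sum] at h0
  simpa [dotProduct_smul, dotProduct_comm y, hy.1] using h0

lemma dualLat_zSpanAdd (h : IsDualFamily e g V) :
    dualLat (zSpanAdd e V) = zSpanAdd g (dotOrth e V) := by
  ext u
  refine ⟨fun hu => ?_, fun ⟨l, hl⟩ => mem_dualLat.2 fun x ⟨l', hl'⟩ => ⟨∑ j, l' j * l j, ?_⟩⟩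
  · have hV : ∀ v ∈ V, v ⬝ᵥ u = 0 := fun v hv =>
      dotProduct_eq_zero_of_forall_smul_mem hu fun t => mem_zSpanAdd_of_mem (V.smul_mem t hv)
    choose z hz using fun i => mem_dualLat.1 hu (e i) (mem_zSpanAdd_self i)
    exact ⟨z, by simpa only [hz] using h.sub_sum_mem_dotOrth hV⟩
  · calc x ⬝ᵥ u = x ⬝ᵥ (u - ∑ j, (l j : ℚ) • g j) + ∑ j, (l j : ℚ) * x ⬝ᵥ g j := by
          simp [dotProduct_sub, dotProduct_sum, dotProduct_smul]
      _ = _ := by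
        simp [dotProduct_eq_zero_of_mem_dotOrth hl hl', h.dotProduct_eq_of_sub_mem hl', mul_comm]

lemma dualLat_dualLat_zSpanAdd (h : IsDualFamily e g V) :
    dualLat (dualLat (zSpanAdd e V)) = zSpanAdd e V := by
  rw [h.dualLat_zSpanAdd, h.symm.dualLat_zSpanAdd, h.dotOrth_dotOrth]

end IsDualFamily

end DualFamily

section GenNumLat

variable {M : Type*} [AddCommGroup M] [Module ℚ M]

lemma IsGenNumLat.zero_mem {K : Set M} (hK : IsGenNumLat K) : 0 ∈ K := by
  obtain ⟨n, k, b, c, rfl⟩ := hK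
  exact ⟨0, 0, by simp⟩

lemma IsGenNumLat.add [FiniteDimensional ℚ M] {K L : Set M} (hK : IsGenNumLat K)
    (hL : IsGenNumLat L) : IsGenNumLat (K + L) := by
  obtain ⟨_, b, V, rfl⟩ := hK.exists_eq_zSpanAdd
  obtain ⟨_, b', V', rfl⟩ := hL.exists_eq_zSpanAdd
  rw [zSpanAdd_add_zSpanAdd]
  exact isGenNumLat_zSpanAdd _ _

variable {X : Type*} [Fintype X]

lemma IsGenNumLat.exists_isDualFamily {K : Set (X → ℚ)} (hK : IsGenNumLat K) :
    ∃ (n : ℕ) (e g : Fin n → X → ℚ) (V : Submodule ℚ (X → ℚ)),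
      K = zSpanAdd e V ∧ IsDualFamily e g V := by
  obtain ⟨_, b, V, rfl⟩ := hK.exists_eq_zSpanAdd
  obtain ⟨n, e, he, hli⟩ := exists_linearIndependent_zSpanAdd_eq b V
  obtain ⟨g, hg⟩ := hli.exists_isDualFamily
  exact ⟨n, e, g, V, he.symm, hg⟩

lemma isGenNumLat_dualLat {K : Set (X → ℚ)} (hK : IsGenNumLat K) :
    IsGenNumLat (dualLat K) := by
  obtain ⟨n, e, g, V, rfl, h⟩ := hK.exists_isDualFamily
  rw [h.dualLat_zSpanAdd]
  exact isGenNumLat_zSpanAdd g _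

lemma IsGenNumLat.dualLat_dualLat {K : Set (X → ℚ)} (hK : IsGenNumLat K) :
    dualLat (dualLat K) = K := by
  obtain ⟨n, e, g, V, rfl, h⟩ := hK.exists_isDualFamily
  exact h.dualLat_dualLat_zSpanAdd

lemma IsGenNumLat.dualLat_inter {A B : Set (X → ℚ)} (hA : IsGenNumLat A) (hB : IsGenNumLat B) :
    dualLat (A ∩ B) = dualLat A + dualLat B := by
  rw [← ((isGenNumLat_dualLat hA).add (isGenNumLat_dualLat hB)).dualLat_dualLat,
    dualLat_add (zero_mem_dualLat A) (zero_mem_dualLat B), hA.dualLat_dualLat, hB.dualLat_dualLat]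

end GenNumLat

section MatchedComp

variable {S P α : Type*}

def matchedComp (KSP : Set (S ⊕ P → α)) (KP : Set (P → α)) : Set (S → α) :=
  {fS | ∃ h ∈ KP, Sum.elim fS h ∈ KSP}

lemma setOf_exists_comp_equiv {Y Z : Type*} (σ : Y ≃ Z) (K : Set (Z → α)) :
    {g | ∃ f ∈ K, g = f ∘ σ} = {g | g ∘ σ.symm ∈ K} := by
  ext g
  refine ⟨fun ⟨f, hf, hg⟩ => ?_, fun hg => ⟨g ∘ σ.symm, hg, ?_⟩⟩
  · simpa [hg, comp_assoc] using hf
  · simp [comp_assoc]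

lemma matchedComp_comp_equiv {S' P' : Type*} (σ : S' ≃ S) (τ : P' ≃ P)
    (KSP : Set (S ⊕ P → α)) (KP : Set (P → α)) :
    matchedComp {g | ∃ f ∈ KSP, g = f ∘ Sum.map σ τ} {g | ∃ h ∈ KP, g = h ∘ τ} =
      {g | ∃ f ∈ matchedComp KSP KP, g = f ∘ σ} := by
  have hSP := setOf_exists_comp_equiv (Equiv.sumCongr σ τ) KSP
  simp only [Equiv.sumCongr_symm] at hSP
  rw [show Sum.map σ τ = Equiv.sumCongr σ τ from rfl, hSP, setOf_exists_comp_equiv,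
    setOf_exists_comp_equiv]
  ext g
  refine ⟨fun ⟨h, hh, hgh⟩ => ⟨h ∘ τ.symm, hh, ?_⟩, fun ⟨h, hh, hgh⟩ => ⟨h ∘ τ, ?_, ?_⟩⟩
  · simpa [Equiv.sumCongr, Sum.elim_comp_map] using hgh
  · simpa [comp_assoc] using hh
  · simpa [Equiv.sumCongr, Sum.elim_comp_map, comp_assoc] using hgh

variable [Fintype S] [Fintype P]

lemma matchedComp_dualLat_subset (KSP : Set (S ⊕ P → ℚ)) (KP : Set (P → ℚ)) :
    matchedComp (dualLat KSP) (dualLat KP) ⊆ dualLat (matchedComp KSP KP) := by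
  rintro g ⟨h, hh, hgh⟩ f ⟨h', hh', hfh'⟩
  obtain ⟨z, hz⟩ := mem_dualLat.1 hgh _ hfh'
  obtain ⟨z', hz'⟩ := mem_dualLat.1 hh h' hh'
  refine ⟨z - z', show f ⬝ᵥ g = _ from ?_⟩
  rw [sumElim_dotProduct_sumElim] at hz
  push_cast
  linear_combination hz - hz'

lemma mem_dualLat_setOf_comp_inr {KP : Set (P → ℚ)} (h0 : 0 ∈ KP) {w : S ⊕ P → ℚ}
    (hw : w ∈ dualLat {x | x ∘ Sum.inr ∈ KP}) : w ∘ Sum.inl = 0 ∧ w ∘ Sum.inr ∈ dualLat KP := by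
  classical
  refine ⟨funext fun s => ?_, fun h hh => ?_⟩
  · have := dotProduct_eq_zero_of_forall_smul_mem hw (a := Pi.single (Sum.inl s) 1) fun t => by
      show (t • Pi.single (Sum.inl s) 1) ∘ Sum.inr ∈ KP
      convert h0
      ext p
      simp
    simpa [single_dotProduct] using this
  · obtain ⟨z, hz⟩ := mem_dualLat.1 hw (Sum.elim 0 h) (by simpa using hh)
    refine ⟨z, ?_⟩
    rw [← Sum.elim_comp_inl_inr w, sumElim_dotProduct_sumElim, zero_dotProduct, zero_add] at hz
    exact hz

lemma dualLat_matchedComp_subset {KSP : Set (S ⊕ P → ℚ)} {KP : Set (P → ℚ)}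
    (hSP : IsGenNumLat KSP) (hP : IsGenNumLat KP) :
    dualLat (matchedComp KSP KP) ⊆ matchedComp (dualLat KSP) (dualLat KP) := by
  intro g hg
  have hB : IsGenNumLat {x : S ⊕ P → ℚ | x ∘ Sum.inr ∈ KP} :=
    hP.preimage (LinearMap.funLeft_surjective_of_injective ℚ ℚ _ Sum.inr_injective)
  have hgB : Sum.elim g 0 ∈ dualLat (KSP ∩ {x | x ∘ Sum.inr ∈ KP}) := by
    rintro x ⟨hx, hxP⟩
    obtain ⟨z, hz⟩ := hg (x ∘ Sum.inl) ⟨x ∘ Sum.inr, hxP, by rwa [Sum.elim_comp_inl_inr]⟩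
    refine ⟨z, ?_⟩
    rw [← Sum.elim_comp_inl_inr x]
    simpa [sumElim_dotProduct_sumElim] using hz
  rw [hSP.dualLat_inter hB] at hgB
  obtain ⟨u, hu, w, hw, huw⟩ := hgB
  obtain ⟨hwS, hwP⟩ := mem_dualLat_setOf_comp_inr hP.zero_mem hw
  refine ⟨-(w ∘ Sum.inr), neg_mem_dualLat hwP, ?_⟩
  convert hu using 1
  rw [eq_sub_of_add_eq huw, ← Sum.elim_comp_inl_inr w, hwS]
  ext (s | p) <;> simp

theorem dualLat_matchedComp {KSP : Set (S ⊕ P → ℚ)} {KP : Set (P → ℚ)}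
    (hSP : IsGenNumLat KSP) (hP : IsGenNumLat KP) :
    dualLat (matchedComp KSP KP) = matchedComp (dualLat KSP) (dualLat KP) :=
  (dualLat_matchedComp_subset hSP hP).antisymm (matchedComp_dualLat_subset KSP KP)

end MatchedComp

theorem stmt14_general {S P : Type*} [Fintype S] [Fintype P]
    (KSP : Set (S ⊕ P → ℚ)) (KP : Set (P → ℚ))
    (pS : Equiv.Perm S) (pP : Equiv.Perm P)
    (h1 : IsGenNumLat KSP) (h2 : IsGenNumLat KP)
    (hsd1 : dualLat KSP = {g | ∃ f ∈ KSP, g = f ∘ Sum.map pS pP})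
    (hsd2 : dualLat KP = {g | ∃ f ∈ KP, g = f ∘ pP}) :
    dualLat {fS | ∃ h ∈ KP, Sum.elim fS h ∈ KSP} =
      {g | ∃ f ∈ {fS | ∃ h ∈ KP, Sum.elim fS h ∈ KSP}, g = f ∘ pS} := by
  change dualLat (matchedComp KSP KP) = {g | ∃ f ∈ matchedComp KSP KP, g = f ∘ pS}
  rw [dualLat_matchedComp h1 h2, hsd1, hsd2, matchedComp_comp_equiv]

/-- Self duality is preserved by matched composition: if `K_SP` and `K_P` are
self dual relative to the involutive permutation `p` (preserving `S` and `P`,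
given by its components `pS`, `pP`), then `K_SP ↔ K_P` is self dual relative
to `p|_S`. -/
theorem stmt14 {S P : Type*} [Fintype S] [Fintype P]
    (KSP : Set (S ⊕ P → ℚ)) (KP : Set (P → ℚ))
    (pS : Equiv.Perm S) (pP : Equiv.Perm P)
    (hpS : ∀ s, pS (pS s) = s) (hpP : ∀ p, pP (pP p) = p)
    (h1 : IsGenNumLat KSP) (h2 : IsGenNumLat KP)
    (hsd1 : dualLat KSP = {g | ∃ f ∈ KSP, g = f ∘ Sum.map pS pP})
    (hsd2 : dualLat KP = {g | ∃ f ∈ KP, g = f ∘ pP}) :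
    dualLat {fS | ∃ h ∈ KP, Sum.elim fS h ∈ KSP} =
      {g | ∃ f ∈ {fS | ∃ h ∈ KP, Sum.elim fS h ∈ KSP}, g = f ∘ pS} :=
  stmt14_general KSP KP pS pP h1 h2 hsd1 hsd2
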